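/- arXiv:2603.06519 — 7 statements merged into one kernel-verified Lean document; each statement's English description precedes it below -/
import Mathlib

section
/- Let C, K : ℝ → ℝ be continuous, I ⊆ ℝ an open interval containing ξ₀, D̃ a real constant, and φ : ℝ → ℝ continuously differentiable on I with K(φ(ξ)) ≠ 0 on I and satisfying the first-integral relation K(φ(ξ))·φ'(ξ) = D̃·exp( -(1/2)·∫_{ξ₀}^{ξ} s·C(φ(s))/K(φ(s)) ds ) for all ξ ∈ I. Then u(x,t) := φ(x/√t) satisfies the nonlinear heat–diffusion equation C(u)u_t = (K(u)u_x)_x at every point (x,t) with t > 0 and x/√t ∈ I. -/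
/-!
Boltzmann's similarity reduction: for `u(x,t) = φ(x/√t)` both sides of the heat equation are
`1/t` times functions of `ξ = x/√t`, and the equation becomes the ODE
`(K(φ)φ')' = -(ξ/2)·C(φ)·φ'`. Differentiating the first integral gives exactly this ODE, since the
exponent has derivative `-(1/2)·ξ·C(φ)/K(φ)` and the factor `D̃·exp(…)` is the flux `K(φ)φ'` itself.
-/

open Set Real Filter Topology

/-- The nonlinear heat–diffusion equation `C(u)·u_t = (K(u)·u_x)_x` holds at the point `p`. -/
def heatEqAt (C K : ℝ → ℝ) (u : ℝ × ℝ → ℝ) (p : ℝ × ℝ) : Prop :=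
  C (u p) * deriv (fun s => u (p.1, s)) p.2 =
    deriv (fun y => K (u (y, p.2)) * deriv (fun z => u (z, p.2)) y) p.1

theorem hasDerivAt_div_sqrt (x : ℝ) {t : ℝ} (ht : 0 < t) :
    HasDerivAt (fun s => x / √s) (-(x / √t) / (2 * t)) t := by
  have hσ : √t ≠ 0 := (sqrt_pos.2 ht).ne'
  refine ((hasDerivAt_const t x).div (hasDerivAt_sqrt ht.ne') hσ).congr_deriv ?_
  rw [sq_sqrt ht.le]
  field_simp
  ring

theorem heatEqAt_of_similarity {C K φ : ℝ → ℝ} {U : Set ℝ} (hU : IsOpen U)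
    (hφ : DifferentiableOn ℝ φ U) {x t : ℝ} (ht : 0 < t) (hξ : x / √t ∈ U)
    (hflux : HasDerivAt (fun ζ => K (φ ζ) * deriv φ ζ)
      (-(x / √t / 2) * C (φ (x / √t)) * deriv φ (x / √t)) (x / √t)) :
    heatEqAt C K (fun p => φ (p.1 / √p.2)) (x, t) := by
  set σ := √t
  have hσ : σ ≠ 0 := (sqrt_pos.2 ht).ne'
  have hσsq : σ ^ 2 = t := sq_sqrt ht.le
  have hφd : ∀ ζ ∈ U, HasDerivAt φ (deriv φ ζ) ζ := fun ζ hζ =>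
    (hφ.differentiableAt (hU.mem_nhds hζ)).hasDerivAt
  have h_time : HasDerivAt (fun s => φ (x / √s)) (deriv φ (x / σ) * (-(x / σ) / (2 * t))) t :=
    (hφd _ hξ).comp t (hasDerivAt_div_sqrt x ht)
  have h_flux_eq : (fun y => K (φ (y / σ)) * deriv (fun z => φ (z / σ)) y)
      =ᶠ[𝓝 x] fun y => K (φ (y / σ)) * deriv φ (y / σ) * σ⁻¹ := by
    have hUx : {y | y / σ ∈ U} ∈ 𝓝 x := (hU.preimage (continuous_id.div_const σ)).mem_nhds hξ
    filter_upwards [hUx] with y hy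
    have hy' : HasDerivAt (fun z => φ (z / σ)) (deriv φ (y / σ) * (1 / σ)) y :=
      (hφd _ hy).comp y ((hasDerivAt_id' y).div_const σ)
    rw [hy'.deriv]
    ring
  have hdiv : HasDerivAt (fun y => y / σ) (1 / σ) x := (hasDerivAt_id' x).div_const σ
  have h_space : HasDerivAt (fun y => K (φ (y / σ)) * deriv φ (y / σ) * σ⁻¹)
      (-(x / σ / 2) * C (φ (x / σ)) * deriv φ (x / σ) * (1 / σ) * σ⁻¹) x :=
    (hflux.comp (h₂ := fun ζ => K (φ ζ) * deriv φ ζ) x hdiv).mul_const σ⁻¹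
  simp only [heatEqAt]
  rw [h_time.deriv, h_flux_eq.deriv_eq, h_space.deriv]
  field_simp
  rw [hσsq]
  ring

theorem hasDerivAt_flux_of_firstIntegral {C K φ : ℝ → ℝ} {U : Set ℝ} {ξ₀ D ξ : ℝ}
    (hU : IsOpen U) (hUc : U.OrdConnected) (hC : Continuous C) (hK : Continuous K)
    (hφ : ContinuousOn φ U) (hKne : ∀ ζ ∈ U, K (φ ζ) ≠ 0) (hξ₀ : ξ₀ ∈ U)
    (hrel : ∀ ζ ∈ U,
      K (φ ζ) * deriv φ ζ = D * exp (-(1 / 2) * ∫ s in ξ₀..ζ, s * C (φ s) / K (φ s)))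
    (hξ : ξ ∈ U) :
    HasDerivAt (fun ζ => K (φ ζ) * deriv φ ζ) (-(ξ / 2) * C (φ ξ) * deriv φ ξ) ξ := by
  set g : ℝ → ℝ := fun s => s * C (φ s) / K (φ s)
  have hg : ContinuousOn g U :=
    (continuousOn_id.mul (hC.comp_continuousOn hφ)).div (hK.comp_continuousOn hφ) hKne
  have h_int : HasDerivAt (fun ζ => ∫ s in ξ₀..ζ, g s) (g ξ) ξ :=
    intervalIntegral.integral_hasDerivAt_right
      ((hg.mono (hUc.uIcc_subset hξ₀ hξ)).intervalIntegrable)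
      (hg.stronglyMeasurableAtFilter hU ξ hξ) (hg.continuousAt (hU.mem_nhds hξ))
  have h_rhs := ((h_int.const_mul (-(1 / 2))).exp).const_mul D
  have h_eq : (fun ζ => K (φ ζ) * deriv φ ζ) =ᶠ[𝓝 ξ]
      fun ζ => D * exp (-(1 / 2) * ∫ s in ξ₀..ζ, g s) :=
    eventually_of_mem (hU.mem_nhds hξ) hrel
  refine (h_rhs.congr_of_eventuallyEq h_eq).congr_deriv ?_
  rw [← mul_assoc, ← hrel ξ hξ]
  have hKξ := hKne ξ hξ
  simp only [g]
  field_simp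

/-- If `φ` satisfies the first integral
`K(φ)φ' = D̃·exp(-(1/2)∫_{ξ₀}^{ξ} s C(φ(s))/K(φ(s)) ds)` on an open interval, then
`u(x,t) = φ(x/√t)` solves `C(u)u_t = (K(u)u_x)_x` for `t > 0`, `x/√t` in the interval. -/
theorem stmt3 (C K : ℝ → ℝ) (hC : Continuous C) (hK : Continuous K)
    (a b ξ₀ Dt : ℝ) (hξ₀ : ξ₀ ∈ Set.Ioo a b)
    (φ : ℝ → ℝ) (hφ : ContDiffOn ℝ 1 φ (Set.Ioo a b))
    (hKne : ∀ ξ ∈ Set.Ioo a b, K (φ ξ) ≠ 0)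
    (hrel : ∀ ξ ∈ Set.Ioo a b,
      K (φ ξ) * deriv φ ξ =
        Dt * Real.exp (-(1 / 2) * ∫ s in ξ₀..ξ, s * C (φ s) / K (φ s))) :
    ∀ x t : ℝ, 0 < t → x / Real.sqrt t ∈ Set.Ioo a b →
      heatEqAt C K (fun p => φ (p.1 / Real.sqrt p.2)) (x, t) := by
  intro x t ht hξ
  exact heatEqAt_of_similarity isOpen_Ioo (hφ.differentiableOn one_ne_zero) ht hξ
    (hasDerivAt_flux_of_firstIntegral isOpen_Ioo ordConnected_Ioo hC hK hφ.continuousOn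
      hKne hξ₀ hrel hξ)
end

section
/- Let D ≠ 0, E ≠ 0, Q be real constants, K : ℝ → ℝ continuously differentiable, F an antiderivative of K (F' = K), and define C(u) := E·K(u)·exp( F(u)/D ). Let Ω ⊆ ℝ² be open, φ : ℝ → ℝ differentiable with φ(t)² = E/(QE + 2t) for all t in the t-projection of Ω, and u : ℝ × ℝ → ℝ twice continuously differentiable on Ω satisfying the invariant relation x·φ(t) = exp( -F(u(x,t))/(2D) ) for all (x,t) ∈ Ω. Then u satisfies the nonlinear heat–diffusion equation C(u)u_t = (K(u)u_x)_x at every point of Ω. (Invariant solution associated with the generator X₄ in Case 1.2 with B = 0.) -/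
open Filter Topology

theorem HasDerivAt.eq_mul_of_eventuallyEq_exp_neg_div {g v F : ℝ → ℝ} {g' v' k c a : ℝ}
    (hg : HasDerivAt g g' a) (hv : HasDerivAt v v' a) (hF : HasDerivAt F k (v a))
    (heq : g =ᶠ[𝓝 a] fun z => Real.exp (-F (v z) / c)) :
    g' = g a * (-(k * v') / c) := by
  rw [heq.eq_of_nhds]
  exact hg.unique ((((hF.comp a hv).neg).div_const c).exp.congr_of_eventuallyEq heq)

theorem mul_deriv_eq_neg_pow_three {φ : ℝ → ℝ} {E Q t : ℝ}
    (hφ : ∀ᶠ s in 𝓝 t, φ s ^ 2 = E / (Q * E + 2 * s)) (hd : DifferentiableAt ℝ φ t)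
    (h0 : φ t ≠ 0) : E * deriv φ t = -φ t ^ 3 := by
  have hS : Q * E + 2 * t ≠ 0 := fun h => h0 (pow_eq_zero_iff two_ne_zero |>.mp
    (by rw [hφ.self_of_nhds, h, div_zero]))
  have hsq : HasDerivAt (fun s => φ s ^ 2) (2 * φ t * deriv φ t) t := by
    simpa [mul_comm] using hd.hasDerivAt.fun_pow 2
  have hrhs : HasDerivAt (fun s => E / (Q * E + 2 * s)) (-(E * 2) / (Q * E + 2 * t) ^ 2) t := by
    simpa using (hasDerivAt_const t E).fun_div
      (((hasDerivAt_id t).const_mul 2).const_add (Q * E)) hS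
  have hφt : φ t ^ 2 * (Q * E + 2 * t) = E := (eq_div_iff hS).mp hφ.self_of_nhds
  have hderiv : 2 * φ t * deriv φ t * (Q * E + 2 * t) ^ 2 = -(E * 2) :=
    (eq_div_iff (pow_ne_zero 2 hS)).mp (hsq.unique (hrhs.congr_of_eventuallyEq hφ))
  have hlin : deriv φ t * (Q * E + 2 * t) = -φ t := by
    apply mul_left_cancel₀ (mul_ne_zero (mul_ne_zero two_ne_zero h0) hS)
    linear_combination hderiv + 2 * hφt
  linear_combination φ t ^ 2 * hlin - deriv φ t * hφt

section InvariantRelation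

variable {D : ℝ} {F K φ : ℝ → ℝ} {Ω : Set (ℝ × ℝ)} {u : ℝ × ℝ → ℝ} {x t : ℝ}

theorem spatial_flux_eq_of_invariant (hD : D ≠ 0) (hF : ∀ y, HasDerivAt F (K y) y)
    (hΩ : IsOpen Ω) (hu : DifferentiableOn ℝ u Ω)
    (hinv : ∀ p ∈ Ω, p.1 * φ p.2 = Real.exp (-F (u p) / (2 * D)))
    (hp : (x, t) ∈ Ω) :
    K (u (x, t)) * deriv (fun z => u (z, t)) x = -2 * D / x := by
  have hpos : 0 < x * φ t := hinv _ hp ▸ Real.exp_pos _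
  have hux : HasDerivAt (fun z => u (z, t)) (deriv (fun z => u (z, t)) x) x :=
    ((hu.differentiableAt (hΩ.mem_nhds hp)).comp x
      (differentiableAt_id.prodMk (differentiableAt_const t))).hasDerivAt
  have heq : (fun z => z * φ t) =ᶠ[𝓝 x] fun z => Real.exp (-F (u (z, t)) / (2 * D)) :=
    ((Continuous.prodMk_left t).tendsto x |>.eventually (hΩ.eventually_mem hp)).mono
      fun z hz => hinv _ hz
  have h :=
    ((hasDerivAt_id' x).mul_const (φ t)).eq_mul_of_eventuallyEq_exp_neg_div hux (hF _) heq
  have hx : x ≠ 0 := left_ne_zero_of_mul hpos.ne'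
  field_simp at h ⊢
  apply mul_left_cancel₀ (right_ne_zero_of_mul hpos.ne')
  linear_combination h

theorem temporal_flux_eq_of_invariant (hD : D ≠ 0) (hF : ∀ y, HasDerivAt F (K y) y)
    (hΩ : IsOpen Ω) (hu : DifferentiableOn ℝ u Ω)
    (hinv : ∀ p ∈ Ω, p.1 * φ p.2 = Real.exp (-F (u p) / (2 * D)))
    (hφ : DifferentiableAt ℝ φ t) (hp : (x, t) ∈ Ω) :
    K (u (x, t)) * deriv (fun s => u (x, s)) t * φ t = -2 * D * deriv φ t := by
  have hpos : 0 < x * φ t := hinv _ hp ▸ Real.exp_pos _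
  have hut : HasDerivAt (fun s => u (x, s)) (deriv (fun s => u (x, s)) t) t :=
    ((hu.differentiableAt (hΩ.mem_nhds hp)).comp t
      ((differentiableAt_const x).prodMk differentiableAt_id)).hasDerivAt
  have heq : (fun s => x * φ s) =ᶠ[𝓝 t] fun s => Real.exp (-F (u (x, s)) / (2 * D)) :=
    ((Continuous.prodMk_right x).tendsto t |>.eventually (hΩ.eventually_mem hp)).mono
      fun s hs => hinv _ hs
  have h := (hφ.hasDerivAt.const_mul x).eq_mul_of_eventuallyEq_exp_neg_div hut (hF _) heq
  field_simp at h ⊢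
  apply mul_left_cancel₀ (left_ne_zero_of_mul hpos.ne')
  linear_combination h

end InvariantRelation

theorem stmt6_general (D E Q : ℝ) (hD : D ≠ 0)
    (K : ℝ → ℝ)
    (F : ℝ → ℝ) (hF : ∀ y : ℝ, HasDerivAt F (K y) y)
    (C : ℝ → ℝ) (hC : ∀ y : ℝ, C y = E * K y * Real.exp (F y / D))
    (Ω : Set (ℝ × ℝ)) (hΩ : IsOpen Ω)
    (φ : ℝ → ℝ) (hφdiff : Differentiable ℝ φ)
    (hφ : ∀ t ∈ Prod.snd '' Ω, φ t ^ 2 = E / (Q * E + 2 * t))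
    (u : ℝ × ℝ → ℝ) (hu : ContDiffOn ℝ 2 u Ω)
    (hinv : ∀ p ∈ Ω, p.1 * φ p.2 = Real.exp (-F (u p) / (2 * D))) :
    ∀ p ∈ Ω, heatEqAt C K u p := by
  have hud : DifferentiableOn ℝ u Ω := hu.differentiableOn two_ne_zero
  rintro ⟨x, t⟩ hp
  have hpos : 0 < x * φ t := hinv _ hp ▸ Real.exp_pos _
  have hx : x ≠ 0 := left_ne_zero_of_mul hpos.ne'
  have hφt : φ t ≠ 0 := right_ne_zero_of_mul hpos.ne'
  have hflux : (fun y => K (u (y, t)) * deriv (fun z => u (z, t)) y) =ᶠ[𝓝 x]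
      fun y => -2 * D / y :=
    ((Continuous.prodMk_left t).tendsto x |>.eventually (hΩ.eventually_mem hp)).mono
      fun y hy => spatial_flux_eq_of_invariant hD hF hΩ hud hinv hy
  have htime := temporal_flux_eq_of_invariant hD hF hΩ hud hinv (hφdiff t) hp
  have hbern : E * deriv φ t = -φ t ^ 3 :=
    mul_deriv_eq_neg_pow_three
      (eventually_of_mem ((isOpenMap_snd Ω hΩ).mem_nhds ⟨_, hp, rfl⟩) hφ)
      (hφdiff t) hφt
  have hexp : Real.exp (F (u (x, t)) / D) * (x * φ t) ^ 2 = 1 := by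
    rw [hinv _ hp, ← Real.exp_nat_mul, ← Real.exp_add, Real.exp_eq_one_iff]
    field_simp
    ring
  have hKut : E * K (u (x, t)) * deriv (fun s => u (x, s)) t = 2 * D * φ t ^ 2 :=
    mul_right_cancel₀ hφt (by linear_combination E * htime - 2 * D * hbern)
  rw [heatEqAt, hC, hflux.deriv_eq, deriv_const_div_id]
  field_simp
  linear_combination (Real.exp (F (u (x, t)) / D) * x ^ 2) * hKut + 2 * D * hexp

/-- Invariant solution associated with the generator `X₄` in Case 1.2 with `B = 0`:
if `x·φ(t) = exp(-F(u)/(2D))` with `φ(t)² = E/(QE+2t)` and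
`C(u) = E·K(u)·exp(F(u)/D)` (where `F' = K`), then `u` solves
`C(u)u_t = (K(u)u_x)_x` on `Ω`. -/
theorem stmt6 (D E Q : ℝ) (hD : D ≠ 0) (hE : E ≠ 0)
    (K : ℝ → ℝ) (hK : ContDiff ℝ 1 K)
    (F : ℝ → ℝ) (hF : ∀ y : ℝ, HasDerivAt F (K y) y)
    (C : ℝ → ℝ) (hC : ∀ y : ℝ, C y = E * K y * Real.exp (F y / D))
    (Ω : Set (ℝ × ℝ)) (hΩ : IsOpen Ω)
    (φ : ℝ → ℝ) (hφdiff : Differentiable ℝ φ)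
    (hφ : ∀ t ∈ Prod.snd '' Ω, φ t ^ 2 = E / (Q * E + 2 * t))
    (u : ℝ × ℝ → ℝ) (hu : ContDiffOn ℝ 2 u Ω)
    (hinv : ∀ p ∈ Ω, p.1 * φ p.2 = Real.exp (-F (u p) / (2 * D))) :
    ∀ p ∈ Ω, heatEqAt C K u p :=
  stmt6_general D E Q hD K F hF C hC Ω hΩ φ hφdiff hφ u hu hinv
end

section
/- Let M, N be real constants, u₂ ≠ 0 a real constant, K : ℝ → ℝ continuously differentiable, F an antiderivative of K (F' = K), and define C(u) := N·K(u)/(4M - F(u))⁴. Let Ω ⊆ ℝ² be open with x ≠ 0 for all (x,t) ∈ Ω, and let u : ℝ × ℝ → ℝ be twice continuously differentiable on Ω satisfying the invariant relation x = ( F(u(x,t)) - 4M )·u₂ for all (x,t) ∈ Ω. Then u satisfies the nonlinear heat–diffusion equation C(u)u_t = (K(u)u_x)_x at every point of Ω. (Invariant solution associated with the generator X₅ in Case 1.3.) -/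
/-!
Writing the invariant relation as `F(u(x,t)) = x/u₂ + 4M`, the chain rule gives
`K(u)·u_t = 0` and `K(u)·u_x = 1/u₂`. So the flux `K(u)·u_x` is locally constant in `x`, the
right-hand side `(K(u)·u_x)_x` vanishes, and so does `C(u)·u_t = N/(4M - F(u))⁴ · K(u)·u_t`.
-/

open Filter Topology

lemma IsOpen.eventually_mem_slice_fst {α β : Type*} [TopologicalSpace α] [TopologicalSpace β]
    {Ω : Set (α × β)} (hΩ : IsOpen Ω) {p : α × β} (hp : p ∈ Ω) :
    ∀ᶠ x in 𝓝 p.1, (x, p.2) ∈ Ω :=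
  (continuous_id.prodMk continuous_const).continuousAt.preimage_mem_nhds (hΩ.mem_nhds hp)

lemma IsOpen.eventually_mem_slice_snd {α β : Type*} [TopologicalSpace α] [TopologicalSpace β]
    {Ω : Set (α × β)} (hΩ : IsOpen Ω) {p : α × β} (hp : p ∈ Ω) :
    ∀ᶠ t in 𝓝 p.2, (p.1, t) ∈ Ω :=
  (continuous_const.prodMk continuous_id).continuousAt.preimage_mem_nhds (hΩ.mem_nhds hp)

lemma mul_deriv_eq_of_comp_eventuallyEq {F K f g : ℝ → ℝ} {x c : ℝ}
    (hF : HasDerivAt F (K (f x)) (f x)) (hf : DifferentiableAt ℝ f x)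
    (hg : HasDerivAt g c x) (h : F ∘ f =ᶠ[𝓝 x] g) : K (f x) * deriv f x = c :=
  (hF.comp x hf.hasDerivAt).unique (hg.congr_of_eventuallyEq h)

section InvariantRelation

variable {F K φ : ℝ → ℝ} {u : ℝ × ℝ → ℝ} {Ω : Set (ℝ × ℝ)} {p : ℝ × ℝ}

lemma mul_deriv_slice_snd_eq_zero_of_comp_eq (hF : ∀ y, HasDerivAt F (K y) y)
    (hΩ : IsOpen Ω) (hp : p ∈ Ω) (hu : DifferentiableAt ℝ u p)
    (hinv : ∀ q ∈ Ω, F (u q) = φ q.1) :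
    K (u p) * deriv (fun t => u (p.1, t)) p.2 = 0 :=
  mul_deriv_eq_of_comp_eventuallyEq (hF (u p))
    (hu.comp p.2 ((differentiableAt_const _).prodMk differentiableAt_id))
    (hasDerivAt_const p.2 (φ p.1))
    (by filter_upwards [hΩ.eventually_mem_slice_snd hp] with t ht using hinv (p.1, t) ht)

lemma mul_deriv_slice_fst_eq_of_comp_eq {c : ℝ} (hF : ∀ y, HasDerivAt F (K y) y)
    (hΩ : IsOpen Ω) (hp : p ∈ Ω) (hu : DifferentiableAt ℝ u p) (hφ : HasDerivAt φ c p.1)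
    (hinv : ∀ q ∈ Ω, F (u q) = φ q.1) :
    K (u p) * deriv (fun x => u (x, p.2)) p.1 = c :=
  mul_deriv_eq_of_comp_eventuallyEq (hF (u p))
    (hu.comp p.1 (differentiableAt_id.prodMk (differentiableAt_const _))) hφ
    (by filter_upwards [hΩ.eventually_mem_slice_fst hp] with x hx using hinv (x, p.2) hx)

end InvariantRelation

theorem stmt7_general (M N u₂ : ℝ) (hu₂ : u₂ ≠ 0)
    (K : ℝ → ℝ)
    (F : ℝ → ℝ) (hF : ∀ y : ℝ, HasDerivAt F (K y) y)
    (C : ℝ → ℝ) (hC : ∀ y : ℝ, C y = N * K y / (4 * M - F y) ^ 4)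
    (Ω : Set (ℝ × ℝ)) (hΩ : IsOpen Ω)
    (u : ℝ × ℝ → ℝ) (hu : ContDiffOn ℝ 2 u Ω)
    (hinv : ∀ p ∈ Ω, p.1 = (F (u p) - 4 * M) * u₂) :
    ∀ p ∈ Ω, heatEqAt C K u p := by
  have hdiff : ∀ q ∈ Ω, DifferentiableAt ℝ u q := fun q hq =>
    (hu.differentiableOn (by norm_num) q hq).differentiableAt (hΩ.mem_nhds hq)
  have hFu : ∀ q ∈ Ω, F (u q) = q.1 / u₂ + 4 * M := fun q hq => by
    rw [hinv q hq]
    field_simp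
    ring
  have hφ : ∀ x : ℝ, HasDerivAt (fun x => x / u₂ + 4 * M) (1 / u₂) x := fun x =>
    ((hasDerivAt_id x).div_const u₂).add_const (4 * M)
  intro p hp
  have hflux : (fun x => K (u (x, p.2)) * deriv (fun z => u (z, p.2)) x) =ᶠ[𝓝 p.1]
      fun _ => 1 / u₂ := by
    filter_upwards [hΩ.eventually_mem_slice_fst hp] with x hx
    exact mul_deriv_slice_fst_eq_of_comp_eq hF hΩ hx (hdiff _ hx) (hφ x) hFu
  have htime := mul_deriv_slice_snd_eq_zero_of_comp_eq (φ := fun x => x / u₂ + 4 * M) hF hΩ hp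
    (hdiff p hp) hFu
  calc C (u p) * deriv (fun t => u (p.1, t)) p.2
      = N / (4 * M - F (u p)) ^ 4 * (K (u p) * deriv (fun t => u (p.1, t)) p.2) := by
        rw [hC]; ring
    _ = deriv (fun x => K (u (x, p.2)) * deriv (fun z => u (z, p.2)) x) p.1 := by
        rw [htime, mul_zero, hflux.deriv_eq, deriv_const]

/-- Invariant solution associated with the generator `X₅` in Case 1.3: if
`x = (F(u) - 4M)·u₂` with `C(u) = N·K(u)/(4M - F(u))⁴` (where `F' = K`),
then `u` solves `C(u)u_t = (K(u)u_x)_x` on `Ω`. -/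
theorem stmt7 (M N u₂ : ℝ) (hu₂ : u₂ ≠ 0)
    (K : ℝ → ℝ) (hK : ContDiff ℝ 1 K)
    (F : ℝ → ℝ) (hF : ∀ y : ℝ, HasDerivAt F (K y) y)
    (C : ℝ → ℝ) (hC : ∀ y : ℝ, C y = N * K y / (4 * M - F y) ^ 4)
    (Ω : Set (ℝ × ℝ)) (hΩ : IsOpen Ω) (hx : ∀ p ∈ Ω, p.1 ≠ 0)
    (u : ℝ × ℝ → ℝ) (hu : ContDiffOn ℝ 2 u Ω)
    (hinv : ∀ p ∈ Ω, p.1 = (F (u p) - 4 * M) * u₂) :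
    ∀ p ∈ Ω, heatEqAt C K u p :=
  stmt7_general M N u₂ hu₂ K F hF C hC Ω hΩ u hu hinv
end

section
/- Let B ≠ 0, D, E be real constants, K : ℝ → ℝ continuously differentiable, F an antiderivative of K (F' = K), and define C(u) := E·K(u)·(B·F(u)+D)^{1/B}. Let Ω ⊆ ℝ² be open, and let u : ℝ × ℝ → ℝ be twice continuously differentiable with B·F(u) + D > 0 on Ω and satisfying the nonlinear heat–diffusion equation C(u)u_t = (K(u)u_x)_x on Ω. For ε ∈ ℝ, let v : ℝ × ℝ → ℝ be twice continuously differentiable on Ω' := {(x,t) : (e^{-ε}x, t) ∈ Ω} and satisfy B·F(v(x,t)) + D = e^{-2Bε}·( B·F(u(e^{-ε}x, t)) + D ) on Ω'. Then v satisfies C(v)v_t = (K(v)v_x)_x at every point of Ω'. (Invariance under the one-parameter group S₄ generated by X₄ = x∂_x - 2A(u)∂_u.) -/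
open Filter Topology

section Flux

variable {F K : ℝ → ℝ}

theorem mul_deriv_eq_of_eventuallyEq_comp (hF : ∀ y, HasDerivAt F (K y) y) {f g : ℝ → ℝ}
    {x c d : ℝ} (hf : DifferentiableAt ℝ f x) (hg : DifferentiableAt ℝ g x)
    (h : ∀ᶠ z in 𝓝 x, F (f z) = c * F (g z) + d) :
    K (f x) * deriv f x = c * (K (g x) * deriv g x) := by
  have hFf := (hF (f x)).comp x hf.hasDerivAt
  have hFg := (((hF (g x)).comp x hg.hasDerivAt).const_mul c).add_const d
  exact hFf.unique (hFg.congr_of_eventuallyEq h)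

variable {u v : ℝ × ℝ → ℝ} {l c d x t : ℝ}

theorem mul_deriv_fst_eq_of_eventuallyEq (hF : ∀ y, HasDerivAt F (K y) y)
    (hv : DifferentiableAt ℝ v (x, t)) (hu : DifferentiableAt ℝ u (l * x, t))
    (h : ∀ᶠ q in 𝓝 (x, t), F (v q) = c * F (u (l * q.1, q.2)) + d) :
    K (v (x, t)) * deriv (fun y => v (y, t)) x =
      c * l * (K (u (l * x, t)) * deriv (fun y => u (y, t)) (l * x)) := by
  have hslice : Tendsto (fun y : ℝ => (y, t)) (𝓝 x) (𝓝 (x, t)) :=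
    Continuous.tendsto (by fun_prop) x
  have hv' : DifferentiableAt ℝ (fun y => v (y, t)) x := hv.comp x (by fun_prop)
  have hu' : DifferentiableAt ℝ (fun y => u (l * y, t)) x := hu.comp x (by fun_prop)
  rw [mul_deriv_eq_of_eventuallyEq_comp hF hv' hu' (hslice.eventually h),
    deriv_comp_mul_left (f := fun y => u (y, t)), smul_eq_mul]
  ring

theorem mul_deriv_snd_eq_of_eventuallyEq (hF : ∀ y, HasDerivAt F (K y) y)
    (hv : DifferentiableAt ℝ v (x, t)) (hu : DifferentiableAt ℝ u (l * x, t))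
    (h : ∀ᶠ q in 𝓝 (x, t), F (v q) = c * F (u (l * q.1, q.2)) + d) :
    K (v (x, t)) * deriv (fun s => v (x, s)) t =
      c * (K (u (l * x, t)) * deriv (fun s => u (l * x, s)) t) := by
  have hslice : Tendsto (fun s : ℝ => (x, s)) (𝓝 t) (𝓝 (x, t)) :=
    Continuous.tendsto (by fun_prop) t
  have hv' : DifferentiableAt ℝ (fun s => v (x, s)) t := hv.comp t (by fun_prop)
  have hu' : DifferentiableAt ℝ (fun s => u (l * x, s)) t := hu.comp t (by fun_prop)
  exact mul_deriv_eq_of_eventuallyEq_comp hF hv' hu' (hslice.eventually h)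

end Flux

theorem deriv_eq_of_eventuallyEq_const_mul_comp_mul {f g : ℝ → ℝ} {a b x : ℝ}
    (h : ∀ᶠ y in 𝓝 x, f y = a * g (b * y)) :
    deriv f x = a * b * deriv g (b * x) := by
  have h' : f =ᶠ[𝓝 x] fun y => a * g (b * y) := h
  rw [h'.deriv_eq, deriv_const_mul_field, deriv_comp_mul_left, smul_eq_mul, mul_assoc]

theorem exp_mul_mul_rpow_one_div {B y : ℝ} (hB : B ≠ 0) (ε : ℝ) (hy : 0 ≤ y) :
    (Real.exp (-2 * B * ε) * y) ^ (1 / B) = Real.exp (-ε) ^ 2 * y ^ (1 / B) := by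
  rw [Real.mul_rpow (Real.exp_pos _).le hy, ← Real.exp_mul, ← Real.exp_nat_mul]
  congr 2
  field_simp
  ring

theorem stmt8_general (B D E ε : ℝ) (hB : B ≠ 0)
    (K : ℝ → ℝ)
    (F : ℝ → ℝ) (hF : ∀ y : ℝ, HasDerivAt F (K y) y)
    (C : ℝ → ℝ) (hC : ∀ y : ℝ, C y = E * K y * (B * F y + D) ^ (1 / B : ℝ))
    (Ω : Set (ℝ × ℝ)) (hΩ : IsOpen Ω)
    (u : ℝ × ℝ → ℝ) (hu : ContDiffOn ℝ 2 u Ω)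
    (hpos : ∀ p ∈ Ω, 0 < B * F (u p) + D)
    (hpde : ∀ p ∈ Ω, heatEqAt C K u p)
    (v : ℝ × ℝ → ℝ)
    (hv : ContDiffOn ℝ 2 v {p : ℝ × ℝ | (Real.exp (-ε) * p.1, p.2) ∈ Ω})
    (hvrel : ∀ p : ℝ × ℝ, (Real.exp (-ε) * p.1, p.2) ∈ Ω →
      B * F (v p) + D =
        Real.exp (-2 * B * ε) * (B * F (u (Real.exp (-ε) * p.1, p.2)) + D)) :
    ∀ p : ℝ × ℝ, (Real.exp (-ε) * p.1, p.2) ∈ Ω → heatEqAt C K v p := by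
  rintro ⟨x, t⟩ hp
  set l := Real.exp (-ε)
  set c := Real.exp (-2 * B * ε)
  set Ω' := {p : ℝ × ℝ | (l * p.1, p.2) ∈ Ω}
  have hΩ' : IsOpen Ω' := hΩ.preimage (by fun_prop)
  have hdu : ∀ q ∈ Ω', DifferentiableAt ℝ u (l * q.1, q.2) := fun q hq =>
    (hu.contDiffAt (hΩ.mem_nhds hq)).differentiableAt (by norm_num)
  have hdv : ∀ q ∈ Ω', DifferentiableAt ℝ v q := fun q hq =>
    (hv.contDiffAt (hΩ'.mem_nhds hq)).differentiableAt (by norm_num)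
  have hrel : ∀ q ∈ Ω', ∀ᶠ r in 𝓝 q, F (v r) = c * F (u (l * r.1, r.2)) + (c - 1) * D / B := by
    intro q hq
    filter_upwards [hΩ'.mem_nhds hq] with r hr
    field_simp
    linear_combination hvrel r hr
  have hflux : ∀ᶠ y in 𝓝 x, K (v (y, t)) * deriv (fun z => v (z, t)) y =
      c * l * (K (u (l * y, t)) * deriv (fun z => u (z, t)) (l * y)) := by
    have hslice : Tendsto (fun y : ℝ => (y, t)) (𝓝 x) (𝓝 (x, t)) :=
      Continuous.tendsto (by fun_prop) x
    filter_upwards [hslice.eventually (hΩ'.mem_nhds hp)] with y hy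
    exact mul_deriv_fst_eq_of_eventuallyEq hF (hdv _ hy) (hdu (y, t) hy) (hrel _ hy)
  have htime := mul_deriv_snd_eq_of_eventuallyEq hF (hdv _ hp) (hdu (x, t) hp) (hrel _ hp)
  dsimp only [heatEqAt]
  rw [deriv_eq_of_eventuallyEq_const_mul_comp_mul
      (g := fun y => K (u (y, t)) * deriv (fun z => u (z, t)) y) hflux,
    ← hpde _ hp, hC, hC, hvrel _ hp, exp_mul_mul_rpow_one_div hB ε (hpos _ hp).le]
  linear_combination E * l ^ 2 * (B * F (u (l * x, t)) + D) ^ (1 / B) * htime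

/-- Invariance under the one-parameter group `S₄` generated by `X₄ = x∂_x - 2A(u)∂_u`:
if `u` solves `C(u)u_t = (K(u)u_x)_x` with `C(u) = E·K(u)·(B·F(u)+D)^{1/B}` and `v`
satisfies `B·F(v(x,t)) + D = e^{-2Bε}(B·F(u(e^{-ε}x,t)) + D)`, then `v` also solves
the equation on the transformed domain. -/
theorem stmt8 (B D E ε : ℝ) (hB : B ≠ 0)
    (K : ℝ → ℝ) (hK : ContDiff ℝ 1 K)
    (F : ℝ → ℝ) (hF : ∀ y : ℝ, HasDerivAt F (K y) y)
    (C : ℝ → ℝ) (hC : ∀ y : ℝ, C y = E * K y * (B * F y + D) ^ (1 / B : ℝ))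
    (Ω : Set (ℝ × ℝ)) (hΩ : IsOpen Ω)
    (u : ℝ × ℝ → ℝ) (hu : ContDiffOn ℝ 2 u Ω)
    (hpos : ∀ p ∈ Ω, 0 < B * F (u p) + D)
    (hpde : ∀ p ∈ Ω, heatEqAt C K u p)
    (v : ℝ × ℝ → ℝ)
    (hv : ContDiffOn ℝ 2 v {p : ℝ × ℝ | (Real.exp (-ε) * p.1, p.2) ∈ Ω})
    (hvrel : ∀ p : ℝ × ℝ, (Real.exp (-ε) * p.1, p.2) ∈ Ω →
      B * F (v p) + D =
        Real.exp (-2 * B * ε) * (B * F (u (Real.exp (-ε) * p.1, p.2)) + D)) :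
    ∀ p : ℝ × ℝ, (Real.exp (-ε) * p.1, p.2) ∈ Ω → heatEqAt C K v p :=
  stmt8_general B D E ε hB K F hF C hC Ω hΩ u hu hpos hpde v hv hvrel
end

section
/- Let α, a, b be real constants, K : ℝ → ℝ continuously differentiable, and F an antiderivative of K (F' = K). Let Ω ⊆ ℝ × (0,∞) be open and u : ℝ × ℝ → ℝ twice continuously differentiable on Ω satisfying the implicit relation F(u(x,t)) = (a·x/t + b)·t^{-1/2}·exp( -α x²/(4t) ) for all (x,t) ∈ Ω. Then u satisfies the nonlinear heat–diffusion equation C(u)u_t = (K(u)u_x)_x with C = αK at every point of Ω. (Invariant solution associated with the generator X̄₁ = tx∂_x + t²∂_t - (αx²/4 + t/2)(∫K du/K)∂_u in Case 2.) -/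
open Filter Topology Real

lemma mul_deriv_eq_deriv_of_comp_eventuallyEq {F K f g : ℝ → ℝ} {x : ℝ}
    (hF : HasDerivAt F (K (f x)) (f x)) (hf : DifferentiableAt ℝ f x)
    (h : F ∘ f =ᶠ[𝓝 x] g) : K (f x) * deriv f x = deriv g x := by
  rw [← h.deriv_eq, (hF.comp x hf.hasDerivAt).deriv]

section Kirchhoff

variable {K F : ℝ → ℝ} {E : Type*} [NormedAddCommGroup E] [NormedSpace ℝ E] {u v : E → ℝ}
  {Ω : Set E}

lemma mul_deriv_comp_eq_of_eqOn_comp (hF : ∀ y, HasDerivAt F (K y) y) (hΩ : IsOpen Ω)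
    (hu : DifferentiableOn ℝ u Ω) (hrel : Set.EqOn (F ∘ u) v Ω) {γ : ℝ → E} {s : ℝ}
    (hγ : DifferentiableAt ℝ γ s) (hs : γ s ∈ Ω) :
    K (u (γ s)) * deriv (u ∘ γ) s = deriv (v ∘ γ) s := by
  have hnear : ∀ᶠ r in 𝓝 s, γ r ∈ Ω :=
    hγ.continuousAt.preimage_mem_nhds (hΩ.mem_nhds hs)
  refine mul_deriv_eq_deriv_of_comp_eventuallyEq (hF _) ?_ (hnear.mono fun r hr => hrel hr)
  exact ((hu _ hs).differentiableAt (hΩ.mem_nhds hs)).comp s hγ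

end Kirchhoff

lemma heatEqAt_const_mul_iff_of_eqOn_comp {α : ℝ} {K F : ℝ → ℝ} {u v : ℝ × ℝ → ℝ}
    {Ω : Set (ℝ × ℝ)} (hF : ∀ y, HasDerivAt F (K y) y) (hΩ : IsOpen Ω)
    (hu : DifferentiableOn ℝ u Ω) (hrel : Set.EqOn (F ∘ u) v Ω) {p : ℝ × ℝ} (hp : p ∈ Ω) :
    heatEqAt (fun y => α * K y) K u p ↔ heatEqAt (fun _ => α) (fun _ => 1) v p := by
  have hx : ∀ q ∈ Ω,
      K (u q) * deriv (fun z => u (z, q.2)) q.1 = deriv (fun z => v (z, q.2)) q.1 :=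
    fun q hq => mul_deriv_comp_eq_of_eqOn_comp (γ := fun z => (z, q.2)) hF hΩ hu hrel
      (differentiableAt_id.prodMk (differentiableAt_const _)) hq
  have ht : K (u p) * deriv (fun s => u (p.1, s)) p.2 = deriv (fun s => v (p.1, s)) p.2 :=
    mul_deriv_comp_eq_of_eqOn_comp (γ := fun s => (p.1, s)) hF hΩ hu hrel
      ((differentiableAt_const _).prodMk differentiableAt_id) hp
  have hflux : (fun y => K (u (y, p.2)) * deriv (fun z => u (z, p.2)) y) =ᶠ[𝓝 p.1]
      fun y => 1 * deriv (fun z => v (z, p.2)) y := by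
    have hline : Continuous fun z : ℝ => (z, p.2) := continuous_id.prodMk continuous_const
    filter_upwards [hline.continuousAt.preimage_mem_nhds (hΩ.mem_nhds hp)] with y hy
    rw [one_mul, hx (y, p.2) hy]
  rw [heatEqAt, heatEqAt, hflux.deriv_eq, mul_assoc, ht]

noncomputable def heatSol (α a b : ℝ) (p : ℝ × ℝ) : ℝ :=
  (a * p.1 / p.2 + b) * p.2 ^ (-(1 / 2) : ℝ) * exp (-α * p.1 ^ 2 / (4 * p.2))

section HeatSol

variable (α a b : ℝ) {t : ℝ}

lemma hasDerivAt_exp_gaussian (x : ℝ) :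
    HasDerivAt (fun y => exp (-α * y ^ 2 / (4 * t)))
      (exp (-α * x ^ 2 / (4 * t)) * -(α * x / (2 * t))) x := by
  refine (((hasDerivAt_pow 2 x).const_mul (-α)).div_const (4 * t)).exp.congr_deriv ?_
  push_cast
  ring

lemma hasDerivAt_heatSol_fst (x : ℝ) :
    HasDerivAt (fun y => heatSol α a b (y, t))
      ((a / t - (a * x / t + b) * (α * x / (2 * t))) * t ^ (-(1 / 2) : ℝ) *
        exp (-α * x ^ 2 / (4 * t))) x := by
  have hlin : HasDerivAt (fun y => a * y / t + b) (a * 1 / t) x :=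
    (((hasDerivAt_id x).const_mul a).div_const t).add_const b
  refine ((hlin.mul_const (t ^ (-(1 / 2) : ℝ))).mul
    (hasDerivAt_exp_gaussian α x)).congr_deriv ?_
  ring

lemma hasDerivAt_deriv_heatSol_fst (x : ℝ) :
    HasDerivAt (fun y => (a / t - (a * y / t + b) * (α * y / (2 * t))) *
        t ^ (-(1 / 2) : ℝ) * exp (-α * y ^ 2 / (4 * t)))
      ((-(a * α * x) / t ^ 2 - (a * x / t + b) * (α / (2 * t)) +
          (a * x / t + b) * (α * x / (2 * t)) ^ 2) *
        t ^ (-(1 / 2) : ℝ) * exp (-α * x ^ 2 / (4 * t))) x := by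
  have hlin : HasDerivAt (fun y => a * y / t + b) (a * 1 / t) x :=
    (((hasDerivAt_id x).const_mul a).div_const t).add_const b
  have hα : HasDerivAt (fun y => α * y / (2 * t)) (α * 1 / (2 * t)) x :=
    ((hasDerivAt_id x).const_mul α).div_const (2 * t)
  refine ((((hlin.mul hα).const_sub (a / t)).mul_const (t ^ (-(1 / 2) : ℝ))).mul
    (hasDerivAt_exp_gaussian α x)).congr_deriv ?_
  simp only [Pi.mul_apply]
  ring

lemma hasDerivAt_heatSol_snd (x : ℝ) (ht : 0 < t) :
    HasDerivAt (fun s => heatSol α a b (x, s))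
      ((-(a * x) / t ^ 2 - (a * x / t + b) / (2 * t) +
          (a * x / t + b) * (α * x ^ 2 / (4 * t ^ 2))) *
        t ^ (-(1 / 2) : ℝ) * exp (-α * x ^ 2 / (4 * t))) t := by
  have hrat : HasDerivAt (fun s => a * x / s + b) ((0 * t - a * x * 1) / t ^ 2) t :=
    ((hasDerivAt_const t (a * x)).div (hasDerivAt_id t) ht.ne').add_const b
  have hpow : HasDerivAt (fun s : ℝ => s ^ (-(1 / 2) : ℝ))
      (-(1 / 2) * t ^ (-(1 / 2) - 1 : ℝ)) t :=
    hasDerivAt_rpow_const (Or.inl ht.ne')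
  have hexp : HasDerivAt (fun s => -α * x ^ 2 / (4 * s))
      ((0 * (4 * t) - -α * x ^ 2 * (4 * 1)) / (4 * t) ^ 2) t :=
    (hasDerivAt_const t _).div ((hasDerivAt_id t).const_mul 4) (by positivity)
  refine ((hrat.mul hpow).mul hexp.exp).congr_deriv ?_
  simp only [Pi.mul_apply]
  rw [rpow_sub ht, rpow_one]
  field_simp
  ring

lemma heatEqAt_heatSol {p : ℝ × ℝ} (hp : 0 < p.2) :
    heatEqAt (fun _ => α) (fun _ => 1) (heatSol α a b) p := by
  obtain ⟨x, t⟩ := p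
  have hflux : (fun y => 1 * deriv (fun z => heatSol α a b (z, t)) y) =
      fun y => (a / t - (a * y / t + b) * (α * y / (2 * t))) *
        t ^ (-(1 / 2) : ℝ) * exp (-α * y ^ 2 / (4 * t)) := by
    funext y
    rw [one_mul, (hasDerivAt_heatSol_fst α a b y).deriv]
  rw [heatEqAt, hflux, (hasDerivAt_deriv_heatSol_fst α a b x).deriv,
    (hasDerivAt_heatSol_snd α a b x hp).deriv]
  field_simp
  ring

end HeatSol

theorem stmt9_general (α a b : ℝ) (K : ℝ → ℝ)
    (F : ℝ → ℝ) (hF : ∀ y : ℝ, HasDerivAt F (K y) y)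
    (Ω : Set (ℝ × ℝ)) (hΩ : IsOpen Ω) (hΩsub : Ω ⊆ {p : ℝ × ℝ | 0 < p.2})
    (u : ℝ × ℝ → ℝ) (hu : ContDiffOn ℝ 2 u Ω)
    (hrel : ∀ p ∈ Ω, F (u p) =
      (a * p.1 / p.2 + b) * p.2 ^ (-(1 / 2) : ℝ) *
        Real.exp (-α * p.1 ^ 2 / (4 * p.2))) :
    ∀ p ∈ Ω, heatEqAt (fun y => α * K y) K u p := by
  intro p hp
  rw [heatEqAt_const_mul_iff_of_eqOn_comp hF hΩ (hu.differentiableOn two_ne_zero) hrel hp]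
  exact heatEqAt_heatSol α a b (hΩsub hp)

/-- Invariant solution associated with the generator `X̄₁` in Case 2 (`C = αK`):
if `F(u(x,t)) = (a·x/t + b)·t^{-1/2}·exp(-αx²/(4t))` (where `F' = K`), then `u`
solves `αK(u)u_t = (K(u)u_x)_x` on `Ω`. -/
theorem stmt9 (α a b : ℝ) (K : ℝ → ℝ) (hK : ContDiff ℝ 1 K)
    (F : ℝ → ℝ) (hF : ∀ y : ℝ, HasDerivAt F (K y) y)
    (Ω : Set (ℝ × ℝ)) (hΩ : IsOpen Ω) (hΩsub : Ω ⊆ {p : ℝ × ℝ | 0 < p.2})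
    (u : ℝ × ℝ → ℝ) (hu : ContDiffOn ℝ 2 u Ω)
    (hrel : ∀ p ∈ Ω, F (u p) =
      (a * p.1 / p.2 + b) * p.2 ^ (-(1 / 2) : ℝ) *
        Real.exp (-α * p.1 ^ 2 / (4 * p.2))) :
    ∀ p ∈ Ω, heatEqAt (fun y => α * K y) K u p :=
  stmt9_general α a b K F hF Ω hΩ hΩsub u hu hrel
end

section
/- Let α, ε be real constants, K : ℝ → ℝ continuously differentiable, and F an antiderivative of K (F' = K). Let Ω ⊆ ℝ² be open and u : ℝ × ℝ → ℝ twice continuously differentiable on Ω satisfying the nonlinear heat–diffusion equation C(u)u_t = (K(u)u_x)_x with C = αK on Ω. Let v : ℝ × ℝ → ℝ be twice continuously differentiable on Ω' := {(x,t) : (x-εt, t) ∈ Ω} and satisfy F(v(x,t)) = F(u(x-εt, t))·exp( -(αε/2)(x-εt) - αε²t/4 ) on Ω'. Then v satisfies C(v)v_t = (K(v)v_x)_x at every point of Ω'. (Invariance under the one-parameter Galilean-type group S̄₃ generated by X̄₃ = t∂_x - (αx∫K du/(2K))∂_u.) -/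
open Filter Topology

section Slices

variable {X Y : Type*} [TopologicalSpace X] [TopologicalSpace Y]

theorem Filter.Eventually.slice_fst {P : X × Y → Prop} {p : X × Y} (h : ∀ᶠ q in 𝓝 p, P q) :
    ∀ᶠ x in 𝓝 p.1, P (x, p.2) :=
  (continuous_id.prodMk continuous_const).continuousAt.tendsto.eventually h

theorem Filter.Eventually.slice_snd {P : X × Y → Prop} {p : X × Y} (h : ∀ᶠ q in 𝓝 p, P q) :
    ∀ᶠ y in 𝓝 p.2, P (p.1, y) :=
  (continuous_const.prodMk continuous_id).continuousAt.tendsto.eventually h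

end Slices

section Partials

variable {Φ : ℝ × ℝ → ℝ} {x t : ℝ}

theorem DifferentiableAt.hasDerivAt_slice_fst (h : DifferentiableAt ℝ Φ (x, t)) :
    HasDerivAt (fun y => Φ (y, t)) (fderiv ℝ Φ (x, t) (1, 0)) x := by
  simpa [Function.comp_def] using
    h.hasFDerivAt.comp_hasDerivAt x ((hasDerivAt_id x).prodMk (hasDerivAt_const x t))

theorem DifferentiableAt.hasDerivAt_slice_snd (h : DifferentiableAt ℝ Φ (x, t)) :
    HasDerivAt (fun s => Φ (x, s)) (fderiv ℝ Φ (x, t) (0, 1)) t := by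
  simpa [Function.comp_def] using
    h.hasFDerivAt.comp_hasDerivAt t ((hasDerivAt_const t x).prodMk (hasDerivAt_id t))

theorem DifferentiableAt.hasDerivAt_comp_galilean {ε : ℝ}
    (h : DifferentiableAt ℝ Φ (x - ε * t, t)) :
    HasDerivAt (fun s => Φ (x - ε * s, s))
      (-ε * deriv (fun y => Φ (y, t)) (x - ε * t) + deriv (fun s => Φ (x - ε * t, s)) t) t := by
  have hcurve : HasDerivAt (fun s : ℝ => (x - ε * s, s)) (-ε, 1) t := by
    simpa using (((hasDerivAt_id t).const_mul ε).const_sub x).prodMk (hasDerivAt_id t)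
  have hsplit : ((-ε, 1) : ℝ × ℝ) = -ε • ((1 : ℝ), (0 : ℝ)) + (0, 1) := by ext <;> simp
  rw [h.hasDerivAt_slice_fst.deriv, h.hasDerivAt_slice_snd.deriv, ← smul_eq_mul, ← map_smul,
    ← map_add, ← hsplit]
  exact h.hasFDerivAt.comp_hasDerivAt_of_eq t hcurve rfl

end Partials

section ExpWeight

variable {φ : ℝ → ℝ} {a b w : ℝ}

theorem HasDerivAt.mul_exp_affine {φ' : ℝ} (h : HasDerivAt φ φ' w) :
    HasDerivAt (fun y => φ y * Real.exp (a * y - b))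
      ((φ' + a * φ w) * Real.exp (a * w - b)) w := by
  have he : HasDerivAt (fun y => Real.exp (a * y - b)) (Real.exp (a * w - b) * a) w := by
    simpa using (((hasDerivAt_id w).const_mul a).sub_const b).exp
  exact (h.mul he).congr_deriv (by ring)

theorem deriv_deriv_mul_exp_affine (h : ContDiffAt ℝ 2 φ w) :
    deriv (deriv fun y => φ y * Real.exp (a * y - b)) w =
      (deriv (deriv φ) w + 2 * a * deriv φ w + a ^ 2 * φ w) * Real.exp (a * w - b) := by
  have h1 : deriv (fun y => φ y * Real.exp (a * y - b)) =ᶠ[𝓝 w]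
      fun y => (deriv φ y + a * φ y) * Real.exp (a * y - b) := by
    filter_upwards [h.eventually (by simp)] with y hy
    exact (hy.differentiableAt (by simp)).hasDerivAt.mul_exp_affine.deriv
  have h2 : HasDerivAt (fun y => deriv φ y + a * φ y) (deriv (deriv φ) w + a * deriv φ w) w :=
    ((h.derivWithin (m := 1) (by norm_num)).differentiableAt (by simp)).hasDerivAt.add
      ((h.differentiableAt (by simp)).hasDerivAt.const_mul a)
  rw [h1.deriv_eq, h2.mul_exp_affine.deriv]
  ring

end ExpWeight

theorem contDiff_succ_of_hasDerivAt {𝕜 E : Type*} [NontriviallyNormedField 𝕜]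
    [NormedAddCommGroup E] [NormedSpace 𝕜 E] {f f' : 𝕜 → E} {n : ℕ}
    (hf' : ContDiff 𝕜 n f') (hf : ∀ x, HasDerivAt f (f' x) x) : ContDiff 𝕜 (n + 1) f := by
  have hderiv : deriv f = f' := funext fun x => (hf x).deriv
  exact contDiff_succ_iff_deriv.2 ⟨fun x => (hf x).differentiableAt, by simp, hderiv ▸ hf'⟩

theorem heatEqAt_congr {C K : ℝ → ℝ} {u v : ℝ × ℝ → ℝ} {p : ℝ × ℝ} (h : u =ᶠ[𝓝 p] v) :
    heatEqAt C K u p ↔ heatEqAt C K v p := by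
  have hx : (fun y => K (u (y, p.2)) * deriv (fun z => u (z, p.2)) y) =ᶠ[𝓝 p.1]
      fun y => K (v (y, p.2)) * deriv (fun z => v (z, p.2)) y := by
    filter_upwards [h.eventuallyEq_nhds.slice_fst] with y hy
    rw [hy.eq_of_nhds, EventuallyEq.deriv_eq hy.slice_fst]
  unfold heatEqAt
  rw [h.eq_of_nhds, EventuallyEq.deriv_eq h.slice_snd, hx.deriv_eq]

theorem heatEqAt_iff_kirchhoff {α : ℝ} {K F : ℝ → ℝ} (hF : ∀ y, HasDerivAt F (K y) y)
    {u : ℝ × ℝ → ℝ} {p : ℝ × ℝ} (hu : ∀ᶠ q in 𝓝 p, DifferentiableAt ℝ u q) :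
    heatEqAt (fun y => α * K y) K u p ↔
      heatEqAt (fun _ => α) (fun _ => 1) (fun q => F (u q)) p := by
  have ht : deriv (fun s => F (u (p.1, s))) p.2 = K (u p) * deriv (fun s => u (p.1, s)) p.2 :=
    ((hF _).comp p.2 hu.self_of_nhds.hasDerivAt_slice_snd.differentiableAt.hasDerivAt).deriv
  have hx : (fun y => K (u (y, p.2)) * deriv (fun z => u (z, p.2)) y) =ᶠ[𝓝 p.1]
      fun y => 1 * deriv (fun z => F (u (z, p.2))) y := by
    filter_upwards [hu.slice_fst] with y hy
    rw [one_mul]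
    exact ((hF _).comp y hy.hasDerivAt_slice_fst.differentiableAt.hasDerivAt).deriv.symm
  unfold heatEqAt
  rw [ht, hx.deriv_eq, mul_assoc]

noncomputable def galileanBoost (α ε : ℝ) (Φ : ℝ × ℝ → ℝ) (p : ℝ × ℝ) : ℝ :=
  Φ (p.1 - ε * p.2, p.2) * Real.exp (-(α * ε / 2) * (p.1 - ε * p.2) - α * ε ^ 2 * p.2 / 4)

theorem heatEqAt_galileanBoost {α ε : ℝ} {Φ : ℝ × ℝ → ℝ} {p : ℝ × ℝ}
    (hΦ : ContDiffAt ℝ 2 Φ (p.1 - ε * p.2, p.2))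
    (h : heatEqAt (fun _ => α) (fun _ => 1) Φ (p.1 - ε * p.2, p.2)) :
    heatEqAt (fun _ => α) (fun _ => 1) (galileanBoost α ε Φ) p := by
  obtain ⟨x, t⟩ := p
  dsimp only at hΦ h
  set E := Real.exp (-(α * ε / 2) * (x - ε * t) - α * ε ^ 2 * t / 4)
  have hslice : ContDiffAt ℝ 2 (fun y => Φ (y, t)) (x - ε * t) :=
    hΦ.comp (x - ε * t) (contDiffAt_id.prodMk contDiffAt_const)
  have hxx : deriv (fun y => deriv (fun z => galileanBoost α ε Φ (z, t)) y) x =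
      (deriv (deriv fun y => Φ (y, t)) (x - ε * t)
        + 2 * -(α * ε / 2) * deriv (fun y => Φ (y, t)) (x - ε * t)
        + (-(α * ε / 2)) ^ 2 * Φ (x - ε * t, t)) * E := by
    set g : ℝ → ℝ := fun w => Φ (w, t) * Real.exp (-(α * ε / 2) * w - α * ε ^ 2 * t / 4)
    have hg : (fun z => galileanBoost α ε Φ (z, t)) = fun z => g (z - ε * t) := rfl
    rw [hg]
    simp only [deriv_comp_sub_const]
    exact deriv_deriv_mul_exp_affine hslice
  have hexp : HasDerivAt (fun s => Real.exp (-(α * ε / 2) * (x - ε * s) - α * ε ^ 2 * s / 4))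
      (E * (α * ε ^ 2 / 4)) t :=
    (((((hasDerivAt_id' t).const_mul ε).const_sub x).const_mul (-(α * ε / 2))).sub
      (((hasDerivAt_id' t).const_mul (α * ε ^ 2)).div_const 4)).exp.congr_deriv
      (by simp only [E, Pi.sub_apply]; ring)
  have ht : HasDerivAt (fun s => galileanBoost α ε Φ (x, s))
      ((-ε * deriv (fun y => Φ (y, t)) (x - ε * t) + deriv (fun s => Φ (x - ε * t, s)) t) * E
        + Φ (x - ε * t, t) * (E * (α * ε ^ 2 / 4))) t :=
    (hΦ.differentiableAt (by simp)).hasDerivAt_comp_galilean.mul hexp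
  unfold heatEqAt at h ⊢
  simp only [one_mul] at h ⊢
  rw [hxx, ht.deriv]
  linear_combination E * h

/-- Invariance under the Galilean-type group `S̄₃` generated by
`X̄₃ = t∂_x - (αx∫K du/(2K))∂_u` in Case 2 (`C = αK`): if `u` solves the equation and
`F(v(x,t)) = F(u(x-εt,t))·exp(-(αε/2)(x-εt) - αε²t/4)` (where `F' = K`), then `v`
also solves it on the transformed domain. -/
theorem stmt12 (α ε : ℝ) (K : ℝ → ℝ) (hK : ContDiff ℝ 1 K)
    (F : ℝ → ℝ) (hF : ∀ y : ℝ, HasDerivAt F (K y) y)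
    (Ω : Set (ℝ × ℝ)) (hΩ : IsOpen Ω)
    (u : ℝ × ℝ → ℝ) (hu : ContDiffOn ℝ 2 u Ω)
    (hpde : ∀ p ∈ Ω, heatEqAt (fun y => α * K y) K u p)
    (v : ℝ × ℝ → ℝ)
    (hv : ContDiffOn ℝ 2 v {p : ℝ × ℝ | (p.1 - ε * p.2, p.2) ∈ Ω})
    (hvrel : ∀ p : ℝ × ℝ, (p.1 - ε * p.2, p.2) ∈ Ω →
      F (v p) = F (u (p.1 - ε * p.2, p.2)) *
        Real.exp (-(α * ε / 2) * (p.1 - ε * p.2) - α * ε ^ 2 * p.2 / 4)) :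
    ∀ p : ℝ × ℝ, (p.1 - ε * p.2, p.2) ∈ Ω → heatEqAt (fun y => α * K y) K v p := by
  have hΩ' : IsOpen {p : ℝ × ℝ | (p.1 - ε * p.2, p.2) ∈ Ω} := hΩ.preimage (by fun_prop)
  have hFu : ContDiffOn ℝ 2 (fun q => F (u q)) Ω :=
    (contDiff_succ_of_hasDerivAt (n := 1) hK hF).comp_contDiffOn hu
  intro p hp
  have hu_lin : heatEqAt (fun _ => α) (fun _ => 1) (fun q => F (u q)) (p.1 - ε * p.2, p.2) :=
    (heatEqAt_iff_kirchhoff hF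
      ((hu.differentiableOn (by simp)).eventually_differentiableAt (hΩ.mem_nhds hp))).1
      (hpde _ hp)
  have hboost := heatEqAt_galileanBoost (hFu.contDiffAt (hΩ.mem_nhds hp)) hu_lin
  have hFv : (fun q => F (v q)) =ᶠ[𝓝 p] galileanBoost α ε fun q => F (u q) := by
    filter_upwards [hΩ'.mem_nhds hp] with q hq using hvrel q hq
  exact (heatEqAt_iff_kirchhoff hF
    ((hv.differentiableOn (by simp)).eventually_differentiableAt (hΩ'.mem_nhds hp))).2
    ((heatEqAt_congr hFv).2 hboost)
end

section
/- Let ρ, c₀, k₀ be positive real constants, β ≠ 0, D̂, Ê real constants, and set α := ρc₀/k₀. Define erf(z) := (2/√π)·∫₀^z exp(-s²) ds. Let Ω ⊆ ℝ × (0,∞) be open and u : ℝ × ℝ → ℝ twice continuously differentiable on Ω satisfying ( 1 + β·u(x,t) )² = D̂·erf( (√α·x)/(2√t) ) + Ê for all (x,t) ∈ Ω. Then u satisfies ρc₀(1+βu)·∂_t u = ∂_x( k₀(1+βu)·∂_x u ) at every point of Ω. (Similarity solution for linear-in-u coefficients, the case p = 1.) -/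
/-!
Write `w = (1 + βu)²`. Then `(1 + βu)u_t = w_t/(2β)` and `(1 + βu)u_x = w_x/(2β)`, so the equation
reduces to the linear heat equation `ρc₀ w_t = k₀ w_xx`, i.e. `α w_t = w_xx`. Any function of the
similarity variable `η = √α x/(2√t)` whose derivative in `η` is a multiple of `exp (-η²)`, such as
`D̂ erf η + Ê`, solves it, because `∂ₜη = -η/(2t)` while `∂ₓ exp (-η²) = -2η exp (-η²) ∂ₓη`.
-/

open Real Filter Topology

theorem hasDerivAt_of_forall_eq_integral_exp_neg_sq {erf : ℝ → ℝ} {c : ℝ}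
    (herf : ∀ z, erf z = c * ∫ s in (0 : ℝ)..z, exp (-s ^ 2)) (z : ℝ) :
    HasDerivAt erf (c * exp (-z ^ 2)) z := by
  rw [funext herf]
  exact ((by fun_prop : Continuous fun s : ℝ => exp (-s ^ 2)).integral_hasStrictDerivAt 0 z
    |>.hasDerivAt.const_mul c)

theorem hasDerivAt_boltzmann_space (γ x t : ℝ) :
    HasDerivAt (fun y => γ * y / (2 * √t)) (γ / (2 * √t)) x := by
  simpa using ((hasDerivAt_id x).const_mul γ).div_const (2 * √t)

theorem hasDerivAt_boltzmann_time (γ x : ℝ) {t : ℝ} (ht : 0 < t) :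
    HasDerivAt (fun s => γ * x / (2 * √s)) (-(γ * x / (2 * √t)) / (2 * t)) t := by
  have h := (((Real.hasDerivAt_sqrt ht.ne').const_mul 2).inv (by positivity)).const_mul (γ * x)
  refine h.congr_deriv ?_
  field_simp
  rw [Real.sq_sqrt ht.le]

section SimilarityProfile

variable {φ : ℝ → ℝ} {A : ℝ} (hφ : ∀ z, HasDerivAt φ (A * exp (-z ^ 2)) z) (γ : ℝ)
include hφ

theorem hasDerivAt_similarityProfile_space (y t : ℝ) :
    HasDerivAt (fun y => φ (γ * y / (2 * √t)))
      (A * exp (-(γ * y / (2 * √t)) ^ 2) * (γ / (2 * √t))) y :=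
  (hφ _).comp y (hasDerivAt_boltzmann_space γ y t)

theorem hasDerivAt_similarityProfile_time (x : ℝ) {t : ℝ} (ht : 0 < t) :
    HasDerivAt (fun s => φ (γ * x / (2 * √s)))
      (A * exp (-(γ * x / (2 * √t)) ^ 2) * (-(γ * x / (2 * √t)) / (2 * t))) t :=
  (hφ _).comp t (hasDerivAt_boltzmann_time γ x ht)

end SimilarityProfile

theorem hasDerivAt_similarityProfile_space_deriv {A : ℝ} (γ x : ℝ) {t : ℝ} (ht : 0 < t) :
    HasDerivAt (fun y => A * exp (-(γ * y / (2 * √t)) ^ 2) * (γ / (2 * √t)))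
      (γ ^ 2 * (A * exp (-(γ * x / (2 * √t)) ^ 2) * (-(γ * x / (2 * √t)) / (2 * t)))) x := by
  have h := ((((hasDerivAt_boltzmann_space γ x t).pow 2).neg.exp).const_mul A).mul_const
    (γ / (2 * √t))
  simp only [Pi.neg_apply, Pi.pow_apply] at h
  refine h.congr_deriv ?_
  simp only [Nat.cast_ofNat, Nat.add_one_sub_one, pow_one]
  field_simp
  linear_combination A * γ ^ 3 * x * Real.sq_sqrt ht.le

theorem two_mul_one_add_mul_deriv_eq_of_sq_eventuallyEq {E : Type*} [NormedAddCommGroup E]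
    [NormedSpace ℝ E] {u F : E → ℝ} {ℓ : ℝ → E} {a β F' : ℝ}
    (hu : DifferentiableAt ℝ u (ℓ a)) (hℓ : DifferentiableAt ℝ ℓ a)
    (hrel : (fun p => (1 + β * u p) ^ 2) =ᶠ[𝓝 (ℓ a)] F)
    (hF : HasDerivAt (fun s => F (ℓ s)) F' a) :
    2 * β * ((1 + β * u (ℓ a)) * deriv (fun s => u (ℓ s)) a) = F' := by
  have hsq := ((((hu.comp a hℓ).hasDerivAt).const_mul β).const_add 1).pow 2
  have hF' := hF.congr_of_eventuallyEq (hℓ.continuousAt.tendsto.eventually hrel)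
  rw [← hsq.unique hF']
  simp only [Function.comp_def]
  ring

/-- Similarity solution for linear-in-`u` coefficients (`p = 1`): if
`(1+βu)² = D̂·erf(√α·x/(2√t)) + Ê` with `α = ρc₀/k₀`, then `u` solves
`ρc₀(1+βu)u_t = (k₀(1+βu)u_x)_x` on `Ω`. -/
theorem stmt16 (ρ c₀ k₀ β Dh Eh : ℝ)
    (hρ : 0 < ρ) (hc : 0 < c₀) (hk : 0 < k₀) (hβ : β ≠ 0)
    (α : ℝ) (hα : α = ρ * c₀ / k₀)
    (erf : ℝ → ℝ)
    (herf : ∀ z : ℝ, erf z = (2 / Real.sqrt Real.pi) * ∫ s in (0 : ℝ)..z, Real.exp (-s ^ 2))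
    (Ω : Set (ℝ × ℝ)) (hΩ : IsOpen Ω) (hΩsub : Ω ⊆ {p : ℝ × ℝ | 0 < p.2})
    (u : ℝ × ℝ → ℝ) (hu : ContDiffOn ℝ 2 u Ω)
    (hrel : ∀ p ∈ Ω, (1 + β * u p) ^ 2 =
      Dh * erf (Real.sqrt α * p.1 / (2 * Real.sqrt p.2)) + Eh) :
    ∀ p ∈ Ω,
      heatEqAt (fun y => ρ * c₀ * (1 + β * y)) (fun y => k₀ * (1 + β * y)) u p := by
  have hkα : k₀ * √α ^ 2 = ρ * c₀ := by
    rw [Real.sq_sqrt (by rw [hα]; positivity), hα]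
    field_simp
  have hφ (z : ℝ) : HasDerivAt (fun z => Dh * erf z + Eh) (Dh * (2 / √π) * exp (-z ^ 2)) z := by
    simpa only [mul_assoc] using
      ((hasDerivAt_of_forall_eq_integral_exp_neg_sq herf z).const_mul Dh).add_const Eh
  have hline {ℓ : ℝ → ℝ × ℝ} {a F' : ℝ} (hℓ : DifferentiableAt ℝ ℓ a) (ha : ℓ a ∈ Ω)
      (hF : HasDerivAt (fun s => Dh * erf (√α * (ℓ s).1 / (2 * √(ℓ s).2)) + Eh) F' a) :
      2 * β * ((1 + β * u (ℓ a)) * deriv (fun s => u (ℓ s)) a) = F' :=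
    two_mul_one_add_mul_deriv_eq_of_sq_eventuallyEq
      ((hu.contDiffAt (hΩ.mem_nhds ha)).differentiableAt (by norm_num)) hℓ
      (eventually_of_mem (hΩ.mem_nhds ha) hrel) hF
  rintro ⟨x, t⟩ hp
  have ht : 0 < t := hΩsub hp
  have htime := hline (ℓ := fun s => (x, s)) (by fun_prop) hp
    (hasDerivAt_similarityProfile_time hφ _ x ht)
  have hflux : (fun y => k₀ * (1 + β * u (y, t)) * deriv (fun z => u (z, t)) y) =ᶠ[𝓝 x]
      fun y => k₀ / (2 * β) *
        (Dh * (2 / √π) * exp (-(√α * y / (2 * √t)) ^ 2) * (√α / (2 * √t))) := by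
    filter_upwards [(by fun_prop : Continuous fun y : ℝ => (y, t)).continuousAt.preimage_mem_nhds
      (hΩ.mem_nhds hp)] with y hy
    rw [← hline (ℓ := fun z => (z, t)) (by fun_prop) hy (hasDerivAt_similarityProfile_space hφ _ y t)]
    field_simp
  have hspace := ((hasDerivAt_similarityProfile_space_deriv _ x ht).const_mul
    (k₀ / (2 * β))).congr_of_eventuallyEq hflux
  show ρ * c₀ * (1 + β * u (x, t)) * deriv (fun s => u (x, s)) t = _
  rw [hspace.deriv, ← hkα, ← htime]
  field_simp
end
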